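/- Let F(u) = ∫₀^{u} exp(t²) dt, f(u) = 1 − 2·u·exp(−u²)·F(u), let u₀ be the unique zero of f in (0, ∞), fix q > 0, and define h(y) = ∫₀^{y} f(q·η) dη. Suppose 0 < ĉ₁ⁱ < ĉ₁ʲ, let c ∈ (0, 1], and suppose ỹⁱ, ỹʲ ∈ [0, u₀/q] satisfy h(ỹⁱ) = c·ĉ₁ⁱ and h(ỹʲ) = c·ĉ₁ʲ. Then ỹⁱ < ỹʲ, and moreover f(q·ỹⁱ) > f(q·ỹʲ); equivalently, writing κⁱ(y) = (1/ĉ₁ⁱ)·f(q·y) and κʲ(y) = (1/ĉ₁ʲ)·f(q·y), the curvatures at the points with common tangent inclination γ₀ = arccos(c) satisfy κⁱ(ỹⁱ) > (ĉ₁ʲ/ĉ₁ⁱ)·κʲ(ỹʲ). -/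

import Mathlib

open Real MeasureTheory intervalIntegral Set

/-- `F(u) = ∫₀^u exp(t²) dt`. -/
noncomputable def Ferf (u : ℝ) : ℝ := ∫ t in (0:ℝ)..u, Real.exp (t ^ 2)

/-- `f(u) = 1 - 2 u exp(-u²) F(u)`, the rescaled curvature function. -/
noncomputable def fker (u : ℝ) : ℝ := 1 - 2 * u * Real.exp (-(u ^ 2)) * Ferf u

/-!
`y ↦ ∫₀^y g` is monotone on any interval where `g ≥ 0`, and `h` integrates `f(q·)`, which is
positive on `[0, u₀/q)`; so the larger value `h(ỹʲ) = c ĉ₁ʲ > c ĉ₁ⁱ = h(ỹⁱ)` forces `ỹⁱ < ỹʲ`.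
Then `f(qỹʲ) < f(qỹⁱ)` because `f` is strictly decreasing on `[0, u₀]`: it solves
`f' = -2u f - 2e^{-u²} F`, and `f > 0` on `[0, u₀)`, since by the intermediate value theorem
a sign change before `u₀` would produce another positive zero.
-/

lemma monotoneOn_integral_of_nonneg {g : ℝ → ℝ} (hg : Continuous g) {a b : ℝ}
    (hg_nonneg : ∀ x ∈ Ioo a b, 0 ≤ g x) :
    MonotoneOn (fun y => ∫ t in a..y, g t) (Icc a b) := by
  have hderiv (y : ℝ) : HasDerivAt (fun y => ∫ t in a..y, g t) (g y) y :=
    hg.integral_hasStrictDerivAt a y |>.hasDerivAt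
  refine monotoneOn_of_deriv_nonneg (convex_Icc a b)
    (continuous_iff_continuousAt.2 fun y => (hderiv y).continuousAt).continuousOn
    (fun y _ => (hderiv y).differentiableAt.differentiableWithinAt) fun y hy => ?_
  rw [(hderiv y).deriv]
  exact hg_nonneg y (by rwa [interior_Icc] at hy)

lemma continuous_exp_sq : Continuous fun t : ℝ => exp (t ^ 2) := by
  fun_prop

lemma hasDerivAt_Ferf (u : ℝ) : HasDerivAt Ferf (exp (u ^ 2)) u :=
  continuous_exp_sq.integral_hasStrictDerivAt 0 u |>.hasDerivAt

lemma Ferf_pos {u : ℝ} (hu : 0 < u) : 0 < Ferf u :=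
  intervalIntegral_pos_of_pos (continuous_exp_sq.intervalIntegrable 0 u) (fun _ => exp_pos _) hu

lemma fker_zero : fker 0 = 1 := by
  simp [fker]

lemma hasDerivAt_fker (u : ℝ) :
    HasDerivAt fker (-2 * u * fker u - 2 * exp (-(u ^ 2)) * Ferf u) u := by
  have hexp : HasDerivAt (fun u : ℝ => exp (-(u ^ 2))) (exp (-(u ^ 2)) * -(2 * u)) u := by
    simpa using ((hasDerivAt_pow 2 u).neg).exp
  have hinv : exp (-(u ^ 2)) * exp (u ^ 2) = 1 := by rw [← exp_add]; simp
  refine (((hasDerivAt_id u).const_mul 2).mul hexp).mul (hasDerivAt_Ferf u) |>.const_sub 1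
    |>.congr_deriv ?_
  simp only [fker, id, Pi.mul_apply]
  linear_combination (-2 * u) * hinv

lemma continuous_fker : Continuous fker :=
  continuous_iff_continuousAt.2 fun u => (hasDerivAt_fker u).continuousAt

lemma fker_pos_of_lt {u₀ : ℝ} (huniq : ∀ u : ℝ, 0 < u → fker u = 0 → u = u₀)
    {u : ℝ} (hu : 0 ≤ u) (hlt : u < u₀) : 0 < fker u := by
  by_contra! hle
  obtain ⟨z, ⟨hz_nonneg, hzu⟩, hz⟩ :=
    intermediate_value_Icc' hu continuous_fker.continuousOn ⟨hle, fker_zero ▸ zero_le_one⟩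
  have hz_ne : z ≠ 0 := by rintro rfl; simp [fker_zero] at hz
  linarith [huniq z (lt_of_le_of_ne hz_nonneg (Ne.symm hz_ne)) hz]

lemma fker_strictAntiOn {u₀ : ℝ} (huniq : ∀ u : ℝ, 0 < u → fker u = 0 → u = u₀) :
    StrictAntiOn fker (Icc 0 u₀) := by
  refine strictAntiOn_of_deriv_neg (convex_Icc 0 u₀) continuous_fker.continuousOn fun u hu => ?_
  rw [interior_Icc] at hu
  rw [(hasDerivAt_fker u).deriv]
  have hf := mul_pos hu.1 (fker_pos_of_lt huniq hu.1.le hu.2)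
  have hF := mul_pos (exp_pos (-(u ^ 2))) (Ferf_pos hu.1)
  linarith

lemma mul_mem_Icc_of_mem_Icc_div {q u y : ℝ} (hq : 0 < q) (hy : y ∈ Icc 0 (u / q)) :
    q * y ∈ Icc 0 u :=
  ⟨mul_nonneg hq.le hy.1, (le_div_iff₀' hq).1 hy.2⟩

theorem curvature_comparison_at_common_inclination_general
    (u₀ q : ℝ)
    (huniq : ∀ u : ℝ, 0 < u → fker u = 0 → u = u₀)
    (hq : 0 < q)
    (h : ℝ → ℝ) (hh : ∀ y : ℝ, h y = ∫ η in (0:ℝ)..y, fker (q * η))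
    (c1i c1j : ℝ) (hi : 0 < c1i) (hij : c1i < c1j)
    (c : ℝ) (hc : c ∈ Set.Ioc (0:ℝ) 1)
    (yi yj : ℝ) (hyi : yi ∈ Set.Icc 0 (u₀ / q)) (hyj : yj ∈ Set.Icc 0 (u₀ / q))
    (hhi : h yi = c * c1i) (hhj : h yj = c * c1j) :
    yi < yj ∧ fker (q * yj) < fker (q * yi) ∧
    (c1j / c1i) * ((1 / c1j) * fker (q * yj)) < (1 / c1i) * fker (q * yi) := by
  have hmono : MonotoneOn h (Icc 0 (u₀ / q)) := by
    rw [funext hh]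
    refine monotoneOn_integral_of_nonneg (continuous_fker.comp (continuous_const_mul q))
      fun η hη => (fker_pos_of_lt huniq (mul_pos hq hη.1).le ?_).le
    exact (lt_div_iff₀' hq).1 hη.2
  have hyij : yi < yj :=
    hmono.reflect_lt hyi hyj (by rw [hhi, hhj]; exact mul_lt_mul_of_pos_left hij hc.1)
  have hflt : fker (q * yj) < fker (q * yi) :=
    fker_strictAntiOn huniq (mul_mem_Icc_of_mem_Icc_div hq hyi)
      (mul_mem_Icc_of_mem_Icc_div hq hyj) (mul_lt_mul_of_pos_left hyij hq)
  refine ⟨hyij, hflt, ?_⟩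
  have hscale : c1j / c1i * (1 / c1j * fker (q * yj)) = 1 / c1i * fker (q * yj) := by
    field_simp [(hi.trans hij).ne']
  rw [hscale]
  exact mul_lt_mul_of_pos_left hflt (one_div_pos.2 hi)

/-- comparing two steady-state curves with the same `q`: if
`0 < ĉ₁ⁱ < ĉ₁ʲ`, `c ∈ (0,1]`, and `ỹⁱ, ỹʲ ∈ [0, u₀/q]` satisfy `h(ỹⁱ) = c ĉ₁ⁱ` and
`h(ỹʲ) = c ĉ₁ʲ` (points of common tangent inclination `γ₀ = arccos c`), then
`ỹⁱ < ỹʲ`, `f(q ỹⁱ) > f(q ỹʲ)`, and `κⁱ(ỹⁱ) > (ĉ₁ʲ/ĉ₁ⁱ) κʲ(ỹʲ)`. -/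
theorem curvature_comparison_at_common_inclination
    (u₀ q : ℝ) (hu₀ : 0 < u₀) (hfu₀ : fker u₀ = 0)
    (huniq : ∀ u : ℝ, 0 < u → fker u = 0 → u = u₀)
    (hq : 0 < q)
    (h : ℝ → ℝ) (hh : ∀ y : ℝ, h y = ∫ η in (0:ℝ)..y, fker (q * η))
    (c1i c1j : ℝ) (hi : 0 < c1i) (hij : c1i < c1j)
    (c : ℝ) (hc : c ∈ Set.Ioc (0:ℝ) 1)
    (yi yj : ℝ) (hyi : yi ∈ Set.Icc 0 (u₀ / q)) (hyj : yj ∈ Set.Icc 0 (u₀ / q))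
    (hhi : h yi = c * c1i) (hhj : h yj = c * c1j) :
    yi < yj ∧ fker (q * yj) < fker (q * yi) ∧
    (c1j / c1i) * ((1 / c1j) * fker (q * yj)) < (1 / c1i) * fker (q * yi) :=
  curvature_comparison_at_common_inclination_general u₀ q huniq hq h hh c1i c1j hi hij c hc yi yj
    hyi hyj hhi hhj
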